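/- arXiv:2310.00812 — 2 statements merged into one kernel-verified Lean document; each statement's English description precedes it below -/
import Mathlib

section
/- For all real u with 0 < u < 1 and all real ε with 0 < ε < 1, one has 0 ≤ (u^{1-ε} - u)/ε - u·log(1/u) ≤ ε. -/
/-!
Put `L = log (1/u) > 0`, so that `u ^ (1 - ε) = u * exp (ε L)` and `u * exp L = 1`. With
`φ t = exp t - 1 - t` the quantity in question is `u * φ (ε L) / ε`, which is nonnegative since
`φ ≥ 0`. For the upper bound, `φ (ε y) ≤ ε² φ y` for `y ≥ 0` (its derivative in `y` reduces to the
convexity of `exp`), and `u * φ L = 1 - u - u L ≤ 1`.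
-/

open Real

lemma exp_mul_sub_one_le {ε : ℝ} (hε0 : 0 ≤ ε) (hε1 : ε ≤ 1) (y : ℝ) :
    exp (ε * y) - 1 ≤ ε * (exp y - 1) := by
  have h := convexOn_exp.2 (Set.mem_univ y) (Set.mem_univ 0) hε0 (sub_nonneg.2 hε1)
    (add_sub_cancel ε 1)
  simp only [smul_eq_mul, mul_zero, add_zero, exp_zero, mul_one] at h
  linarith

lemma exp_mul_sub_one_sub_mul_le {ε y : ℝ} (hε0 : 0 ≤ ε) (hε1 : ε ≤ 1) (hy : 0 ≤ y) :
    exp (ε * y) - 1 - ε * y ≤ ε ^ 2 * (exp y - 1 - y) := by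
  let h : ℝ → ℝ := fun t => ε ^ 2 * (exp t - 1 - t) - (exp (ε * t) - 1 - ε * t)
  have h_deriv : ∀ t, HasDerivAt h (ε * (ε * (exp t - 1) - (exp (ε * t) - 1))) t := by
    intro t
    have h_lin : HasDerivAt (fun t => ε * t) ε t := by simpa using (hasDerivAt_id' t).const_mul ε
    have h_exp : HasDerivAt (fun t => exp t - 1 - t) (exp t - 1) t :=
      ((hasDerivAt_exp t).sub_const 1).sub (hasDerivAt_id' t)
    exact ((h_exp.const_mul (ε ^ 2)).sub ((h_lin.exp.sub_const 1).sub h_lin)).congr_deriv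
      (by ring)
  have h_mono : Monotone h := monotone_of_hasDerivAt_nonneg h_deriv fun t =>
    mul_nonneg hε0 (sub_nonneg.2 (exp_mul_sub_one_le hε0 hε1 t))
  have h_le := h_mono hy
  simp only [h, mul_zero, exp_zero, sub_self] at h_le
  linarith

theorem stmt1 (u ε : ℝ) (hu0 : 0 < u) (hu1 : u < 1) (he0 : 0 < ε) (he1 : ε < 1) :
    0 ≤ (u ^ (1 - ε) - u) / ε - u * Real.log (1 / u) ∧
    (u ^ (1 - ε) - u) / ε - u * Real.log (1 / u) ≤ ε := by
  set L := log (1 / u) with hL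
  have hL0 : 0 < L := log_pos (one_lt_one_div hu0 hu1)
  have hu_expL : u * exp L = 1 := by
    rw [hL, exp_log (one_div_pos.2 hu0)]
    field_simp
  have h_rpow : u ^ (1 - ε) = u * exp (ε * L) := by
    rw [rpow_def_of_pos hu0, hL, one_div, log_inv, ← exp_log hu0, ← exp_add, log_exp]
    ring_nf
  have h_eq : (u ^ (1 - ε) - u) / ε - u * L = u * (exp (ε * L) - 1 - ε * L) / ε := by
    rw [h_rpow]
    field_simp
  rw [h_eq]
  constructor
  · have h_nonneg : 0 ≤ exp (ε * L) - 1 - ε * L := by linarith [add_one_le_exp (ε * L)]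
    positivity
  · have h_taylor := exp_mul_sub_one_sub_mul_le he0.le he1.le hL0.le
    rw [div_le_iff₀ he0]
    calc u * (exp (ε * L) - 1 - ε * L) ≤ u * (ε ^ 2 * (exp L - 1 - L)) :=
          mul_le_mul_of_nonneg_left h_taylor hu0.le
      _ = ε ^ 2 * (1 - u - u * L) := by linear_combination ε ^ 2 * hu_expL
      _ ≤ ε * ε := by nlinarith [mul_pos hu0 hL0]
end

section
/- Define, for q ∈ [0,1], α₁(q) = −(1/4)(1/4)^q + (1/4)(3/4)^q + 1/8, α₂(q) = (1/4)(1/2)^q − 1/8, α₃(q) = (1/4)(1/4)^q − (1/4)(3/4)^q + 1/8, and α₄(q) = (1/2)(1/4)^q − (3/4)(1/2)^q + (1/2)(3/4)^q − 1/8. Then αₗ(q) ≥ 0 for all q ∈ [0,1] and all ℓ ∈ {1,2,3,4}, and αₗ(q) > 0 for all q ∈ [0,1) and all ℓ ∈ {1,2,3,4}. -/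
/-!
The first two coefficients are handled by monotonicity of `x ↦ x ^ q` and `q ↦ x ^ q`. For the
last two, multiplying by `8 * 4 ^ q` clears the fractional bases and turns `α₃, α₄` into
`2 + 4 ^ q - 2 * 3 ^ q` and `4 + 4 * 3 ^ q - 6 * 2 ^ q - 4 ^ q`. Both vanish at `q = 1` and are
strictly decreasing on `[0, 1]`: their derivatives are negative there by Bernoulli's inequality,
a tangent-line bound for `2 ^ q`, and the integer comparisons `2 ^ 4 < 3 ^ 3` and `3 ^ 5 < 2 ^ 8`.
-/

open Real Set

lemma pos_of_hasDerivAt_neg_of_eq_zero {f f' : ℝ → ℝ} {a b x : ℝ}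
    (hf : ∀ y, HasDerivAt f (f' y) y) (hf' : ∀ y ∈ Ioo a b, f' y < 0) (hb : f b = 0)
    (hax : a ≤ x) (hxb : x < b) : 0 < f x := by
  have hanti : StrictAntiOn f (Icc a b) := by
    refine strictAntiOn_of_deriv_neg (convex_Icc a b)
      (fun y _ => (hf y).continuousAt.continuousWithinAt) fun y hy => ?_
    rw [interior_Icc] at hy
    rw [(hf y).deriv]
    exact hf' y hy
  exact hb ▸ hanti ⟨hax, hxb.le⟩ ⟨hax.trans hxb.le, le_rfl⟩ hxb

lemma mul_log_lt_mul_log_of_pow_lt {a b : ℝ} {m n : ℕ} (ha : 0 < a) (h : a ^ m < b ^ n) :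
    m * log a < n * log b := by
  simpa only [log_pow] using log_lt_log (pow_pos ha m) h

lemma hasDerivAt_const_rpow {a : ℝ} (ha : 0 < a) (r : ℝ) :
    HasDerivAt (fun x => a ^ x) (a ^ r * log a) r :=
  (hasStrictDerivAt_const_rpow ha r).hasDerivAt

lemma rpow_le_div_mul_rpow {a b r : ℝ} (ha : 0 < a) (hab : a ≤ b) (hr : r ≤ 1) :
    b ^ r ≤ b / a * a ^ r :=
  calc b ^ r = (b / a) ^ r * a ^ r := by
        rw [← mul_rpow (div_nonneg (ha.le.trans hab) ha.le) ha.le, div_mul_cancel₀ b ha.ne']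
    _ ≤ (b / a) ^ (1 : ℝ) * a ^ r :=
        mul_le_mul_of_nonneg_right
          (rpow_le_rpow_of_exponent_le ((one_le_div ha).2 hab) hr) (by positivity)
    _ = b / a * a ^ r := by rw [rpow_one]

lemma two_add_four_rpow_sub_two_mul_three_rpow_pos {q : ℝ} (hq0 : 0 ≤ q) (hq1 : q < 1) :
    0 < 2 + (4 : ℝ) ^ q - 2 * 3 ^ q := by
  refine pos_of_hasDerivAt_neg_of_eq_zero (f := fun r => 2 + (4 : ℝ) ^ r - 2 * 3 ^ r)
    (fun r => ((hasDerivAt_const_rpow (by norm_num) r).const_add 2).sub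
      ((hasDerivAt_const_rpow (by norm_num) r).const_mul 2)) (fun r hr => ?_) (by norm_num) hq0 hq1
  have h4 : (4 : ℝ) ^ r ≤ 4 / 3 * 3 ^ r := by
    simpa using rpow_le_div_mul_rpow (a := 3) (b := 4) (by norm_num) (by norm_num) hr.2.le
  have hlog : 4 * log 2 < 3 * log 3 := by
    exact_mod_cast mul_log_lt_mul_log_of_pow_lt (m := 4) (n := 3) two_pos
      (by norm_num : (2 : ℝ) ^ 4 < 3 ^ 3)
  have hl2 : 0 < log 2 := log_pos one_lt_two
  have h3 : 0 < (3 : ℝ) ^ r := by positivity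
  rw [log_four_eq]
  nlinarith [mul_le_mul_of_nonneg_right h4 hl2.le]

lemma four_add_four_mul_three_rpow_sub_six_mul_two_rpow_sub_four_rpow_pos {q : ℝ} (hq0 : 0 ≤ q)
    (hq1 : q < 1) : 0 < 4 + 4 * (3 : ℝ) ^ q - 6 * 2 ^ q - 4 ^ q := by
  refine pos_of_hasDerivAt_neg_of_eq_zero (f := fun r => 4 + 4 * (3 : ℝ) ^ r - 6 * 2 ^ r - 4 ^ r)
    (fun r => ((((hasDerivAt_const_rpow (by norm_num) r).const_mul 4).const_add 4).sub
      ((hasDerivAt_const_rpow (by norm_num) r).const_mul 6)).sub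
      (hasDerivAt_const_rpow (by norm_num) r)) (fun r hr => ?_) (by norm_num) hq0 hq1
  obtain ⟨hr0, hr1⟩ := hr
  set t := (2 : ℝ) ^ r
  have ht : 0 < t := by positivity
  have h4 : (4 : ℝ) ^ r = t * t := by
    rw [← mul_rpow (by norm_num) (by norm_num)]; norm_num
  have h3 : (3 : ℝ) ^ r ≤ (1 + r / 2) * t := by
    have bernoulli := rpow_one_add_le_one_add_mul_self (s := 1 / 2) (by norm_num) hr0.le hr1.le
    calc (3 : ℝ) ^ r = (1 + 1 / 2) ^ r * t := by
          rw [← mul_rpow (by norm_num) (by norm_num)]; norm_num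
      _ ≤ (1 + r / 2) * t := by
          gcongr
          linarith
  have htangent : 2 * (1 + log 2 * (r - 1)) ≤ t := by
    calc 2 * (1 + log 2 * (r - 1)) ≤ 2 * exp (log 2 * (r - 1)) := by
          gcongr
          linarith [add_one_le_exp (log 2 * (r - 1))]
      _ = t := by
          rw [exp_mul, exp_log two_pos, rpow_sub two_pos, rpow_one]
          ring
  have hlog : 5 * log 3 < 8 * log 2 := by
    exact_mod_cast mul_log_lt_mul_log_of_pow_lt (m := 5) (n := 8) three_pos
      (by norm_num : (3 : ℝ) ^ 5 < 2 ^ 8)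
  have hlog2 : log 2 < 9 / 10 := by linarith [log_two_lt_d9]
  have hl2 : 0 < log 2 := log_pos one_lt_two
  have hl3 : 0 < log 3 := log_pos (by norm_num)
  -- After `htangent` the bracket below is affine in `r`; these are its values at `r = 0, 1`.
  have hend0 : 4 * log 3 - 10 * log 2 + 4 * log 2 ^ 2 < 0 := by nlinarith
  have hend1 : 6 * log 3 - 10 * log 2 < 0 := by linarith
  have hbracket : 4 * log 3 * (1 + r / 2) - 6 * log 2 - 2 * log 2 * t < 0 := by
    nlinarith [mul_le_mul_of_nonneg_left htangent hl2.le,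
      mul_neg_of_pos_of_neg (sub_pos.2 hr1) hend0, mul_neg_of_pos_of_neg hr0 hend1]
  rw [h4, log_four_eq]
  nlinarith [mul_le_mul_of_nonneg_left h3 hl3.le, mul_neg_of_pos_of_neg ht hbracket]

lemma alpha₁_pos {q : ℝ} (hq : 0 ≤ q) :
    0 < -(1/4) * (1/4 : ℝ) ^ q + (1/4) * (3/4 : ℝ) ^ q + 1/8 := by
  have : (1/4 : ℝ) ^ q ≤ (3/4 : ℝ) ^ q := rpow_le_rpow (by norm_num) (by norm_num) hq
  linarith

lemma alpha₂_pos {q : ℝ} (hq : q < 1) : 0 < (1/4) * (1/2 : ℝ) ^ q - 1/8 := by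
  have : (1/2 : ℝ) ^ (1 : ℝ) < (1/2 : ℝ) ^ q :=
    rpow_lt_rpow_of_exponent_gt (by norm_num) (by norm_num) hq
  rw [rpow_one] at this
  linarith

lemma alpha₃_eq (q : ℝ) :
    (1/4) * (1/4 : ℝ) ^ q - (1/4) * (3/4 : ℝ) ^ q + 1/8 =
      (2 + 4 ^ q - 2 * 3 ^ q) / (8 * 4 ^ q) := by
  have h4 : (0 : ℝ) < 4 ^ q := by positivity
  rw [div_rpow (by norm_num) (by norm_num), div_rpow (by norm_num) (by norm_num), one_rpow]
  field_simp
  ring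

lemma alpha₄_eq (q : ℝ) :
    (1/2) * (1/4 : ℝ) ^ q - (3/4) * (1/2 : ℝ) ^ q + (1/2) * (3/4 : ℝ) ^ q - 1/8 =
      (4 + 4 * 3 ^ q - 6 * 2 ^ q - 4 ^ q) / (8 * 4 ^ q) := by
  have h4 : (0 : ℝ) < 4 ^ q := by positivity
  rw [show (1/2 : ℝ) = 2 / 4 by norm_num, div_rpow (by norm_num) (by norm_num),
    div_rpow (by norm_num) (by norm_num), div_rpow (by norm_num) (by norm_num), one_rpow]
  field_simp
  ring

lemma alpha₃_pos {q : ℝ} (hq0 : 0 ≤ q) (hq1 : q < 1) :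
    0 < (1/4) * (1/4 : ℝ) ^ q - (1/4) * (3/4 : ℝ) ^ q + 1/8 := by
  rw [alpha₃_eq]
  exact div_pos (two_add_four_rpow_sub_two_mul_three_rpow_pos hq0 hq1) (by positivity)

lemma alpha₄_pos {q : ℝ} (hq0 : 0 ≤ q) (hq1 : q < 1) :
    0 < (1/2) * (1/4 : ℝ) ^ q - (3/4) * (1/2 : ℝ) ^ q + (1/2) * (3/4 : ℝ) ^ q - 1/8 := by
  rw [alpha₄_eq]
  exact div_pos (four_add_four_mul_three_rpow_sub_six_mul_two_rpow_sub_four_rpow_pos hq0 hq1)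
    (by positivity)

theorem stmt11 (q : ℝ) (hq0 : 0 ≤ q) (hq1 : q ≤ 1) :
    (0 ≤ -(1/4) * (1/4 : ℝ) ^ q + (1/4) * (3/4 : ℝ) ^ q + 1/8) ∧
    (0 ≤ (1/4) * (1/2 : ℝ) ^ q - 1/8) ∧
    (0 ≤ (1/4) * (1/4 : ℝ) ^ q - (1/4) * (3/4 : ℝ) ^ q + 1/8) ∧
    (0 ≤ (1/2) * (1/4 : ℝ) ^ q - (3/4) * (1/2 : ℝ) ^ q + (1/2) * (3/4 : ℝ) ^ q - 1/8) ∧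
    (q < 1 →
      (0 < -(1/4) * (1/4 : ℝ) ^ q + (1/4) * (3/4 : ℝ) ^ q + 1/8) ∧
      (0 < (1/4) * (1/2 : ℝ) ^ q - 1/8) ∧
      (0 < (1/4) * (1/4 : ℝ) ^ q - (1/4) * (3/4 : ℝ) ^ q + 1/8) ∧
      (0 < (1/2) * (1/4 : ℝ) ^ q - (3/4) * (1/2 : ℝ) ^ q + (1/2) * (3/4 : ℝ) ^ q - 1/8)) := by
  have hpos (hq : q < 1) : _ ∧ _ ∧ _ ∧ _ :=
    ⟨alpha₁_pos hq0, alpha₂_pos hq, alpha₃_pos hq0 hq, alpha₄_pos hq0 hq⟩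
  rcases hq1.lt_or_eq with hq | rfl
  · obtain ⟨h₁, h₂, h₃, h₄⟩ := hpos hq
    exact ⟨h₁.le, h₂.le, h₃.le, h₄.le, hpos⟩
  · norm_num
end
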